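/- arXiv:1809.02902 — 2 statements merged into one kernel-verified Lean document; each statement's English description precedes it below -/
import Mathlib

section
/- Let n ≥ 2 and let u ∈ C⁴(ℝⁿ) be 2-convex with σ₂(D²u(x)) = 1 for all x ∈ ℝⁿ. Let x₀ be a point at which the Hessian D²u(x₀) is a diagonal matrix with diagonal entries u₁₁ ≥ u₂₂ ≥ ... ≥ uₙₙ. Then, at x₀, −Σ_{i≠j} u_{ii1} u_{jj1} ≥ 2(n−1) u₁₁₁² / ((n−1)u₁₁² + 2(n−2)), where u_{ijk} denotes the third partial derivative ∂³u/∂xᵢ∂xⱼ∂xₖ. -/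
open scoped BigOperators

noncomputable section

/-- The Hessian matrix of `u` at `x`, whose `(i,j)` entry is the second partial
derivative `∂ᵢ∂ⱼ u (x)`. -/
def Hess {n : ℕ} (u : EuclideanSpace ℝ (Fin n) → ℝ) (x : EuclideanSpace ℝ (Fin n)) :
    Matrix (Fin n) (Fin n) ℝ :=
  fun i j => iteratedFDeriv ℝ 2 u x ![EuclideanSpace.single i 1, EuclideanSpace.single j 1]

/-- `σ₁` of a (symmetric) matrix: the first elementary symmetric function of its
eigenvalues, i.e. the trace. -/
def sigma1M {n : ℕ} (M : Matrix (Fin n) (Fin n) ℝ) : ℝ := M.trace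

/-- `σ₂` of a (symmetric) matrix: the second elementary symmetric function of its
eigenvalues, computed by Newton's identity. -/
def sigma2M {n : ℕ} (M : Matrix (Fin n) (Fin n) ℝ) : ℝ :=
  (M.trace ^ 2 - (M * M).trace) / 2

/-- `σ₃` of a (symmetric) matrix: the third elementary symmetric function of its
eigenvalues, computed by Newton's identity. -/
def sigma3M {n : ℕ} (M : Matrix (Fin n) (Fin n) ℝ) : ℝ :=
  (M.trace ^ 3 - 3 * M.trace * (M * M).trace + 2 * (M * M * M).trace) / 6

/-- `u` is 2-convex: the eigenvalue vector of its Hessian lies in the Gårding cone `Γ₂`,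
i.e. `σ₁(D²u) > 0` and `σ₂(D²u) > 0` everywhere. -/
def TwoConvex {n : ℕ} (u : EuclideanSpace ℝ (Fin n) → ℝ) : Prop :=
  ∀ x, 0 < sigma1M (Hess u x) ∧ 0 < sigma2M (Hess u x)

/-- `u` satisfies quadratic growth. -/
def QuadGrowth {n : ℕ} (u : EuclideanSpace ℝ (Fin n) → ℝ) : Prop :=
  ∃ b > (0:ℝ), ∃ c > (0:ℝ), ∃ R > (0:ℝ), ∀ x, R ≤ ‖x‖ → b * ‖x‖ ^ 2 - c ≤ u x
/-- Third partial derivative `∂ᵢ∂ⱼ∂ₖ u (x)`. -/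
def D3 {n : ℕ} (u : EuclideanSpace ℝ (Fin n) → ℝ) (x : EuclideanSpace ℝ (Fin n))
    (i j k : Fin n) : ℝ :=
  iteratedFDeriv ℝ 3 u x
    ![EuclideanSpace.single i 1, EuclideanSpace.single j 1, EuclideanSpace.single k 1]


/-!
Write `λ` for the diagonal of `D²u(x₀)`, `σ = ∑ λᵢ`, `tᵢ = u_{ii1}` and `S = ∑ tᵢ`. The equation
at `x₀` reads `σ² - |λ|² = 2`, and differentiating `σ₂(D²u) = 1` along `e₁` gives the constraint
`∑ᵢ (σ - λᵢ) tᵢ = 0`. With `a = σ - λ₁`, `A = ∑_{i≠1} (σ - λᵢ)`, `B = ∑_{i≠1} (σ - λᵢ)²`,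
`D = (n-1)λ₁² + 2(n-2)` and `m = a t₁ + A S`, these two relations turn
`B² (D (|t|² - S²) - 2(n-1) t₁²)` into the sum of squares
`D ∑_{i≠1} (B (tᵢ - S) + m (σ - λᵢ))² + B (D S + (a A - B) t₁)²`;
the terms `B (tᵢ - S) + m (σ - λᵢ)` come from the Lagrange condition for minimising
`|t|² - S²` under the constraint. Cauchy–Schwarz for `(λᵢ)_{i≠1}` gives `B ≥ D > 0`.
-/

open Finset

section Algebra

variable {ι : Type*} [Fintype ι]

theorem sum_mul_add_mul_add_sq (f g : ι → ℝ) (x y z : ℝ) :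
    ∑ i, (x * f i + y * g i + z) ^ 2 =
      x ^ 2 * ∑ i, f i ^ 2 + y ^ 2 * ∑ i, g i ^ 2 + Fintype.card ι * z ^ 2
        + 2 * x * y * ∑ i, f i * g i + 2 * x * z * ∑ i, f i + 2 * y * z * ∑ i, g i := by
  have hconst : (Fintype.card ι : ℝ) * z ^ 2 = ∑ _i : ι, z ^ 2 := by simp
  rw [hconst]
  simp only [mul_sum, ← sum_add_distrib]
  exact sum_congr rfl fun i _ => by ring

theorem sum_sum_ite_eq_sq_sum_sub_sum_sq [DecidableEq ι] (f : ι → ℝ) :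
    ∑ i, ∑ j, (if i = j then 0 else f i * f j) = (∑ i, f i) ^ 2 - ∑ i, f i ^ 2 := by
  have hrow (i j : ι) : (if i = j then 0 else f i * f j) =
      f i * f j - if i = j then f i * f j else 0 := by
    split_ifs with h <;> simp [h]
  simp only [hrow, sum_sub_distrib, sum_ite_eq, mem_univ, if_true, sq, sum_mul_sum]

theorem sq_sum_sub_le_card_sub_one_mul (f : ι → ℝ) (k : ι) :
    (∑ i, f i - f k) ^ 2 ≤ (Fintype.card ι - 1) * (∑ i, f i ^ 2 - f k ^ 2) := by
  classical
  have h := sq_sum_le_card_mul_sum_sq (s := univ.erase k) (f := f)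
  rwa [sum_erase_eq_sub (mem_univ k), sum_erase_eq_sub (mem_univ k),
    card_erase_of_mem (mem_univ k), card_univ,
    Nat.cast_pred (Fintype.card_pos_iff.mpr ⟨k⟩)] at h

theorem le_sum_sq_sub_sq_sum_of_sigma2_eq_one (hcard : 2 ≤ Fintype.card ι) (lam t : ι → ℝ)
    (k : ι) (hσ₂ : (∑ i, lam i) ^ 2 - ∑ i, lam i ^ 2 = 2)
    (hcon : ∑ i, (∑ j, lam j - lam i) * t i = 0) :
    2 * ((Fintype.card ι : ℝ) - 1) * t k ^ 2 /
        ((Fintype.card ι - 1) * lam k ^ 2 + 2 * (Fintype.card ι - 2)) ≤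
      ∑ i, t i ^ 2 - (∑ i, t i) ^ 2 := by
  have hN : (2 : ℝ) ≤ Fintype.card ι := by exact_mod_cast hcard
  have hcs := sq_sum_sub_le_card_sub_one_mul lam k
  set N : ℝ := (Fintype.card ι : ℝ)
  set σ := ∑ i, lam i
  have hsq : ∑ i, lam i ^ 2 = σ ^ 2 - 2 := by linarith
  have hP : ∑ i, t i * lam i = σ * ∑ i, t i := by
    simp only [sub_mul, sum_sub_distrib, ← mul_sum] at hcon
    simp only [mul_comm (t _)]
    linarith
  rw [hsq] at hcs
  have hD : 0 < (N - 1) * lam k ^ 2 + 2 * (N - 2) := by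
    rcases eq_or_ne (lam k) 0 with hl | hl
    · rw [hl] at hcs ⊢
      nlinarith
    · have := sq_pos_of_ne_zero hl
      nlinarith
  set a := σ - lam k
  set A := (N - 2) * σ + lam k
  set B := (N - 1) * σ ^ 2 - 2 - a ^ 2
  set D := (N - 1) * lam k ^ 2 + 2 * (N - 2)
  set m := a * t k + A * ∑ i, t i
  have hDB : D ≤ B := by linarith
  -- `∑_{i ≠ k} F i ^ 2 ≥ 0` for `F i = B (t i - S) + m (σ - lam i)`, with `S = ∑ t`
  have hF := single_le_sum (f := fun i => (B * t i + -m * lam i + (m * σ - B * ∑ i, t i)) ^ 2)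
    (fun i _ => sq_nonneg _) (mem_univ k)
  rw [sum_mul_add_mul_add_sq, hsq, hP] at hF
  have key : 0 ≤ B ^ 2 * (D * (∑ i, t i ^ 2 - (∑ i, t i) ^ 2) - 2 * (N - 1) * t k ^ 2) := by
    calc 0 ≤ D * _ + B * (D * ∑ i, t i + (a * A - B) * t k) ^ 2 :=
          add_nonneg (mul_nonneg hD.le (sub_nonneg.mpr hF))
            (mul_nonneg (hD.le.trans hDB) (sq_nonneg _))
      _ = _ := by ring
  rw [div_le_iff₀ hD]
  linarith [(mul_nonneg_iff_of_pos_left (pow_pos (hD.trans_le hDB) 2)).mp key]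

end Algebra

section ThirdDerivative

variable {E F : Type*} [NormedAddCommGroup E] [NormedSpace ℝ E] [NormedAddCommGroup F]
  [NormedSpace ℝ F] {f : E → F}

theorem hasDerivAt_iteratedFDeriv_comp_add_smul {k : ℕ} (hf : ContDiff ℝ (k + 1) f)
    (x v : E) (m : Fin k → E) :
    HasDerivAt (fun r : ℝ => iteratedFDeriv ℝ k f (x + r • v) m)
      (iteratedFDeriv ℝ (k + 1) f x (Fin.cons v m)) 0 := by
  have hd : DifferentiableAt ℝ (iteratedFDeriv ℝ k f) x :=
    hf.differentiable_iteratedFDeriv (by norm_cast; omega) x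
  have hline : HasDerivAt (fun r : ℝ => x + r • v) v 0 := by
    simpa using ((hasDerivAt_id (0 : ℝ)).smul_const v).const_add x
  rw [iteratedFDeriv_succ_apply_left, Fin.cons_zero, Fin.tail_cons]
  exact (hd.hasFDerivAt.continuousMultilinear_apply_const m).comp_hasDerivAt_of_eq 0 hline
    (by simp)

theorem iteratedFDeriv_three_swap_left (hf : ContDiff ℝ 3 f) (x a b c : E) :
    iteratedFDeriv ℝ 3 f x ![a, b, c] = iteratedFDeriv ℝ 3 f x ![b, a, c] := by
  have hsymm : IsSymmSndFDerivAt ℝ (fderiv ℝ f) x :=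
    ((hf.fderiv_right (m := 2) (by norm_num)).contDiffAt).isSymmSndFDerivAt (by simp)
  have hinit (p q r : E) : Fin.init ![p, q, r] = ![p, q] := by
    ext i; fin_cases i <;> rfl
  rw [iteratedFDeriv_succ_apply_right (m := ![a, b, c]),
    iteratedFDeriv_succ_apply_right (m := ![b, a, c]), hinit, hinit]
  exact congrArg (· c) hsymm.iteratedFDeriv_cons

theorem iteratedFDeriv_three_swap_right (hf : ContDiff ℝ 3 f) (x a b c : E) :
    iteratedFDeriv ℝ 3 f x ![a, b, c] = iteratedFDeriv ℝ 3 f x ![a, c, b] := by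
  have hsymm (y : E) : iteratedFDeriv ℝ 2 f y ![b, c] = iteratedFDeriv ℝ 2 f y ![c, b] :=
    (hf.contDiffAt.isSymmSndFDerivAt (by norm_num)).iteratedFDeriv_cons
  have hd : DifferentiableAt ℝ (iteratedFDeriv ℝ 2 f) x :=
    hf.differentiable_iteratedFDeriv (by norm_num) x
  calc iteratedFDeriv ℝ 3 f x ![a, b, c]
      = fderiv ℝ (fun y => iteratedFDeriv ℝ 2 f y ![b, c]) x a := by
        rw [iteratedFDeriv_succ_apply_left, fderiv_continuousMultilinear_apply_const_apply hd]
        rfl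
    _ = fderiv ℝ (fun y => iteratedFDeriv ℝ 2 f y ![c, b]) x a := by simp only [hsymm]
    _ = iteratedFDeriv ℝ 3 f x ![a, c, b] := by
        rw [iteratedFDeriv_succ_apply_left, fderiv_continuousMultilinear_apply_const_apply hd]
        rfl

end ThirdDerivative

theorem Matrix.IsDiag.trace_mul {m α : Type*} [Fintype m] [NonUnitalNonAssocSemiring α]
    {M : Matrix m m α} (hM : M.IsDiag) (N : Matrix m m α) :
    (M * N).trace = ∑ i, M i i * N i i := by
  classical
  rw [← hM.diagonal_diag]
  simp [Matrix.trace, Matrix.diagonal_mul]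

section Sigma2

variable {n : ℕ}

theorem two_mul_sigma2M_of_isDiag {M : Matrix (Fin n) (Fin n) ℝ} (hM : M.IsDiag) :
    2 * sigma2M M = (∑ i, M i i) ^ 2 - ∑ i, M i i ^ 2 := by
  rw [sigma2M, hM.trace_mul]
  simp only [Matrix.trace, Matrix.diag, sq]
  ring

theorem hasDerivAt_sigma2M {M : ℝ → Matrix (Fin n) (Fin n) ℝ} {M' : Matrix (Fin n) (Fin n) ℝ}
    {r : ℝ} (hM : ∀ i j, HasDerivAt (fun s => M s i j) (M' i j) r) :
    HasDerivAt (fun s => sigma2M (M s)) ((M r).trace * M'.trace - (M r * M').trace) r := by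
  have htrace : HasDerivAt (fun s => (M s).trace) M'.trace r :=
    HasDerivAt.fun_sum fun i _ => hM i i
  have htrace_mul : HasDerivAt (fun s => (M s * M s).trace)
      (∑ i, ∑ j, (M' i j * M r j i + M r i j * M' j i)) r := by
    simp only [Matrix.trace, Matrix.diag, Matrix.mul_apply]
    exact HasDerivAt.fun_sum fun i _ => HasDerivAt.fun_sum fun j _ => (hM i j).fun_mul (hM j i)
  refine (((htrace.fun_pow 2).fun_sub htrace_mul).div_const 2).congr_deriv ?_
  have hcomm : ∑ i, ∑ j, M' i j * M r j i = (M r * M').trace := by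
    rw [Matrix.trace_mul_comm]
    simp [Matrix.trace, Matrix.mul_apply]
  have hself : ∑ i, ∑ j, M r i j * M' j i = (M r * M').trace := by
    simp [Matrix.trace, Matrix.mul_apply]
  simp only [sum_add_distrib, hcomm, hself]
  ring

theorem sum_sigma1_sub_mul_D3_eq_zero {u : EuclideanSpace ℝ (Fin n) → ℝ}
    (hu : ContDiff ℝ 3 u) (heq : ∀ x, sigma2M (Hess u x) = 1) {x₀ : EuclideanSpace ℝ (Fin n)}
    (hdiag : (Hess u x₀).IsDiag) (k : Fin n) :
    ∑ i, (∑ j, Hess u x₀ j j - Hess u x₀ i i) * D3 u x₀ i i k = 0 := by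
  set e : Fin n → EuclideanSpace ℝ (Fin n) := fun i => EuclideanSpace.single i 1
  set H' : Matrix (Fin n) (Fin n) ℝ := fun i j => iteratedFDeriv ℝ 3 u x₀ ![e k, e i, e j]
  have hentry (i j : Fin n) :
      HasDerivAt (fun r : ℝ => Hess u (x₀ + r • e k) i j) (H' i j) 0 :=
    hasDerivAt_iteratedFDeriv_comp_add_smul hu x₀ (e k) ![e i, e j]
  have hconst : HasDerivAt (fun r : ℝ => sigma2M (Hess u (x₀ + r • e k))) 0 0 := by
    simpa only [heq] using hasDerivAt_const (0 : ℝ) (1 : ℝ)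
  have hzero := (hasDerivAt_sigma2M hentry).unique hconst
  have hsymm (i : Fin n) : D3 u x₀ i i k = H' i i :=
    (iteratedFDeriv_three_swap_right hu x₀ _ _ _).trans
      (iteratedFDeriv_three_swap_left hu x₀ _ _ _)
  simp only [zero_smul, add_zero, hdiag.trace_mul] at hzero
  simp only [hsymm, sub_mul, sum_sub_distrib, ← mul_sum]
  exact hzero

end Sigma2

theorem third_derivative_inequality_general (n : ℕ) (hn : 2 ≤ n) [NeZero n]
    (u : EuclideanSpace ℝ (Fin n) → ℝ) (hu : ContDiff ℝ 4 u)
    (heq : ∀ x, sigma2M (Hess u x) = 1)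
    (x₀ : EuclideanSpace ℝ (Fin n))
    (hdiag : ∀ i j : Fin n, i ≠ j → Hess u x₀ i j = 0) :
    -(∑ i, ∑ j, if i = j then 0 else D3 u x₀ i i 0 * D3 u x₀ j j 0) ≥
      2 * ((n:ℝ) - 1) * (D3 u x₀ 0 0 0) ^ 2 /
        (((n:ℝ) - 1) * (Hess u x₀ 0 0) ^ 2 + 2 * ((n:ℝ) - 2)) := by
  have hdiag' : (Hess u x₀).IsDiag := hdiag
  have hσ₂ : (∑ i, Hess u x₀ i i) ^ 2 - ∑ i, Hess u x₀ i i ^ 2 = 2 := by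
    rw [← two_mul_sigma2M_of_isDiag hdiag', heq, mul_one]
  have hcon := sum_sigma1_sub_mul_D3_eq_zero (hu.of_le (by norm_num)) heq hdiag' 0
  have key := le_sum_sq_sub_sq_sum_of_sigma2_eq_one (by simpa using hn)
    (fun i => Hess u x₀ i i) (fun i => D3 u x₀ i i 0) 0 hσ₂ hcon
  rw [Fintype.card_fin] at key
  rw [ge_iff_le, sum_sum_ite_eq_sq_sum_sub_sum_sq (fun i => D3 u x₀ i i 0)]
  linarith

/-- At a point where the Hessian of a 2-convex solution of `σ₂(D²u)=1` is diagonal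
with decreasing diagonal entries,
`-∑_{i≠j} u_{ii1}u_{jj1} ≥ 2(n-1)u₁₁₁²/((n-1)u₁₁² + 2(n-2))`. -/
theorem third_derivative_inequality (n : ℕ) (hn : 2 ≤ n) [NeZero n]
    (u : EuclideanSpace ℝ (Fin n) → ℝ) (hu : ContDiff ℝ 4 u)
    (hconv : TwoConvex u)
    (heq : ∀ x, sigma2M (Hess u x) = 1)
    (x₀ : EuclideanSpace ℝ (Fin n))
    (hdiag : ∀ i j : Fin n, i ≠ j → Hess u x₀ i j = 0)
    (hsort : ∀ i j : Fin n, i ≤ j → Hess u x₀ j j ≤ Hess u x₀ i i) :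
    -(∑ i, ∑ j, if i = j then 0 else D3 u x₀ i i 0 * D3 u x₀ j j 0) ≥
      2 * ((n:ℝ) - 1) * (D3 u x₀ 0 0 0) ^ 2 /
        (((n:ℝ) - 1) * (Hess u x₀ 0 0) ^ 2 + 2 * ((n:ℝ) - 2)) :=
  third_derivative_inequality_general n hn u hu heq x₀ hdiag
end
end

section
/- Let n ≥ 3 and let λ₁ ≥ λ₂ ≥ ... ≥ λₙ be real numbers with λ = (λ₁, ..., λₙ) ∈ Γ₂. Then for every j with 2 ≤ j ≤ n, |λⱼ| ≤ (n−2) λ₂; moreover 0 < σ₁(λ) − λ₁ ≤ (n−2)λ₂ + λₙ. -/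
/-!
Newton's identity `σ₁² = ∑ λᵢ² + 2σ₂` shows that on `Γ₂` every entry satisfies `λᵢ² < σ₁²`,
hence `λ₁ < σ₁`. For a sorted vector `σ₁ - λ₁ ≤ (n-2)λ₂ + λₙ`; positivity of the left side then
forces `λ₂ > 0` and `-λₙ < (n-2)λ₂`, which together with `λⱼ ≤ λ₂` bound every `|λⱼ|`, `j ≥ 2`.
-/

open scoped BigOperators

noncomputable section

/-- The `k`-th elementary symmetric polynomial of `w ∈ ℝⁿ`. -/
def esymm (n k : ℕ) (w : Fin n → ℝ) : ℝ :=
  ∑ s ∈ Finset.powersetCard k Finset.univ, ∏ i ∈ s, w i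

lemma esymm_eq_eval (n k : ℕ) (w : Fin n → ℝ) :
    esymm n k w = MvPolynomial.eval w (MvPolynomial.esymm (Fin n) ℝ k) := by
  simp [esymm, MvPolynomial.esymm]

lemma esymm_one_eq_sum (n : ℕ) (w : Fin n → ℝ) : esymm n 1 w = ∑ i, w i := by
  simp [esymm_eq_eval]

lemma sq_esymm_one (n : ℕ) (w : Fin n → ℝ) :
    esymm n 1 w ^ 2 = ∑ i, w i ^ 2 + 2 * esymm n 2 w := by
  have newton := congrArg (MvPolynomial.eval w)
    (MvPolynomial.psum_eq_mul_esymm_sub_sum (Fin n) ℝ 2 two_pos)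
  have middle_terms :
      {x ∈ Finset.HasAntidiagonal.antidiagonal 2 | 0 < x.1 ∧ x.1 ≤ 1} = {(1, 1)} := by
    decide
  simp only [MvPolynomial.psum, map_sum, map_pow, MvPolynomial.eval_X, Nat.reduceAdd,
    Nat.cast_ofNat, Set.mem_Ioo, Order.lt_two_iff, map_sub, map_mul, map_neg, map_one,
    MvPolynomial.eval_ofNat, ← esymm_eq_eval, middle_terms, Finset.sum_singleton, pow_one,
    esymm_one_eq_sum] at newton
  rw [esymm_one_eq_sum]
  linear_combination -newton

lemma sq_lt_sq_esymm_one {n : ℕ} {w : Fin n → ℝ} (h₂ : 0 < esymm n 2 w) (i : Fin n) :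
    w i ^ 2 < esymm n 1 w ^ 2 := by
  have := Finset.single_le_sum (fun j _ => sq_nonneg (w j)) (Finset.mem_univ i)
  rw [sq_esymm_one]
  linarith

lemma lt_esymm_one {n : ℕ} {w : Fin n → ℝ} (h₁ : 0 < esymm n 1 w) (h₂ : 0 < esymm n 2 w)
    (i : Fin n) : w i < esymm n 1 w :=
  lt_of_pow_lt_pow_left₀ 2 h₁.le (sq_lt_sq_esymm_one h₂ i)

lemma sum_le_of_antitone {m : ℕ} {w : Fin (m + 2) → ℝ} (hw : Antitone w) :
    ∑ i, w i ≤ w 0 + m * w 1 + w (Fin.last _) := by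
  rw [Fin.sum_univ_succ, Fin.sum_univ_castSucc]
  have h_middle : ∑ i : Fin m, w i.castSucc.succ ≤ m * w 1 := by
    simpa using Finset.sum_le_card_nsmul Finset.univ (fun i : Fin m => w i.castSucc.succ) (w 1)
      fun i _ => hw (Fin.one_le_of_ne_zero (Fin.succ_ne_zero _))
  rw [Fin.succ_last]
  linarith

/-- For a sorted vector `λ ∈ Γ₂` (with `n ≥ 3`): `|λⱼ| ≤ (n-2)λ₂` for every `j ≥ 2`,
and `0 < σ₁(λ) - λ₁ ≤ (n-2)λ₂ + λₙ`. -/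
theorem gamma2_entry_bounds (n : ℕ) (hn : 3 ≤ n) [NeZero n] (l : Fin n → ℝ)
    (hsort : ∀ i j : Fin n, i ≤ j → l j ≤ l i)
    (hG : 0 < esymm n 1 l ∧ 0 < esymm n 2 l) :
    (∀ j : Fin n, j ≠ 0 → |l j| ≤ ((n:ℝ) - 2) * l 1) ∧
    0 < esymm n 1 l - l 0 ∧
    esymm n 1 l - l 0 ≤ ((n:ℝ) - 2) * l 1 + l ⟨n - 1, by omega⟩ := by
  obtain ⟨hσ₁, hσ₂⟩ := hG
  obtain ⟨m, rfl⟩ : ∃ m, n = m + 1 + 2 := ⟨n - 3, by omega⟩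
  have h_last : (⟨m + 1 + 2 - 1, by omega⟩ : Fin (m + 1 + 2)) = Fin.last _ := Fin.ext (by simp)
  have h_coeff : ((m + 1 + 2 : ℕ) : ℝ) - 2 = (m + 1 : ℕ) := by push_cast; ring
  rw [h_last, h_coeff]
  have h_pos : 0 < esymm _ 1 l - l 0 := sub_pos.2 (lt_esymm_one hσ₁ hσ₂ 0)
  have h_upper : esymm _ 1 l - l 0 ≤ (m + 1 : ℕ) * l 1 + l (Fin.last _) := by
    rw [esymm_one_eq_sum]
    linarith [sum_le_of_antitone (m := m + 1) hsort]
  have h_last_le (j) : l (Fin.last _) ≤ l j := hsort _ _ (Fin.le_last j)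
  have h_le_one (j : Fin _) (hj : j ≠ 0) : l j ≤ l 1 := hsort _ _ (Fin.one_le_of_ne_zero hj)
  have h_one_pos : 0 < l 1 := by nlinarith [h_last_le 1]
  have h_coeff_ge_one : (1 : ℝ) ≤ (m + 1 : ℕ) := by simp
  refine ⟨fun j hj => abs_le.2 ⟨by linarith [h_last_le j], ?_⟩, h_pos, h_upper⟩
  exact (h_le_one j hj).trans (le_mul_of_one_le_left h_one_pos.le h_coeff_ge_one)
end
end
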